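/- arXiv:1103.1255 — 2 statements merged into one kernel-verified Lean document; each statement's English description precedes it below -/
import Mathlib

section
/- Let A ⊆ L₁ × L₂ be a finite set, and define Ā(z) = ⊕₂_{J ∈ K^A_z} (⊗₂_{(x,y)∈J} y), where K^A_z = {J ⊆ A | z ⪯₁ ⊕₁_{(x,y)∈J} x}. Then for all z, z' ∈ L₁, Ā(z ⊕₁ z') ⪰₂ Ā(z) ⊗₂ Ā(z'). -/
/-- An annotation domain: an idempotent commutative semiring
`(L, ⊕, ⊗, ⊥, ⊤)` in which `⊕` is `⊤`-annihilating. -/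
structure AnnDom (L : Type*) where
  oplus : L → L → L
  otimes : L → L → L
  bot : L
  top : L
  oplus_idem : ∀ a, oplus a a = a
  oplus_comm : ∀ a b, oplus a b = oplus b a
  oplus_assoc : ∀ a b c, oplus (oplus a b) c = oplus a (oplus b c)
  otimes_comm : ∀ a b, otimes a b = otimes b a
  otimes_assoc : ∀ a b c, otimes (otimes a b) c = otimes a (otimes b c)
  bot_oplus : ∀ a, oplus bot a = a
  top_otimes : ∀ a, otimes top a = a
  bot_otimes : ∀ a, otimes bot a = bot
  top_oplus : ∀ a, oplus top a = top
  otimes_distrib : ∀ a b c, otimes a (oplus b c) = oplus (otimes a b) (otimes a c)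

/-- The induced order: `a ⪯ b` iff `a ⊕ b = b`. -/
def AnnDom.le {L : Type*} (D : AnnDom L) (a b : L) : Prop := D.oplus a b = b

open Classical in
/-- The join `⊕₁` of the first coordinates of the pairs in `J` (`⊥₁` if empty). -/
noncomputable def joinFst {L1 L2 : Type*} (D1 : AnnDom L1) (J : Finset (L1 × L2)) : L1 :=
  haveI : Std.Commutative D1.oplus := ⟨D1.oplus_comm⟩
  haveI : Std.Associative D1.oplus := ⟨D1.oplus_assoc⟩
  J.fold D1.oplus D1.bot Prod.fst

open Classical in
/-- `K^A_z = {J ⊆ A | z ⪯₁ ⊕₁_{(x,y)∈J} x}`. -/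
noncomputable def Kset {L1 L2 : Type*} (D1 : AnnDom L1) (A : Finset (L1 × L2))
    (z : L1) : Finset (Finset (L1 × L2)) :=
  A.powerset.filter (fun J => D1.le z (joinFst D1 J))


open Classical in
/-- `Ā(z) = ⊕₂_{J ∈ K^A_z} (⊗₂_{(x,y)∈J} y)` (empty join is `⊥₂`, empty
product is `⊤₂`). -/
noncomputable def Abar {L1 L2 : Type*} (D1 : AnnDom L1) (D2 : AnnDom L2)
    (A : Finset (L1 × L2)) (z : L1) : L2 :=
  haveI : Std.Commutative D2.oplus := ⟨D2.oplus_comm⟩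
  haveI : Std.Associative D2.oplus := ⟨D2.oplus_assoc⟩
  haveI : Std.Commutative D2.otimes := ⟨D2.otimes_comm⟩
  haveI : Std.Associative D2.otimes := ⟨D2.otimes_assoc⟩
  (Kset D1 A z).fold D2.oplus D2.bot (fun J => J.fold D2.otimes D2.top Prod.snd)

section Aux

variable {L : Type*} (D : AnnDom L)

lemma AD.le_refl (a : L) : D.le a a := D.oplus_idem a

lemma AD.le_trans {a b c : L} (h1 : D.le a b) (h2 : D.le b c) : D.le a c := by
  unfold AnnDom.le at *
  rw [← h2, ← D.oplus_assoc, h1]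

lemma AD.sup_le {a b c : L} (h1 : D.le a c) (h2 : D.le b c) :
    D.le (D.oplus a b) c := by
  unfold AnnDom.le at *
  rw [D.oplus_assoc, h2, h1]

lemma AD.le_oplus_left (a b : L) : D.le a (D.oplus a b) := by
  unfold AnnDom.le
  rw [← D.oplus_assoc, D.oplus_idem]

lemma AD.otimes_le_left (x y : L) : D.le (D.otimes x y) x := by
  unfold AnnDom.le
  have h : D.oplus (D.otimes x y) (D.otimes x D.top) = D.otimes x D.top := by
    rw [← D.otimes_distrib, D.oplus_comm, D.top_oplus]
  rwa [D.otimes_comm x D.top, D.top_otimes] at h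

lemma AD.bot_le (a : L) : D.le D.bot a := D.bot_oplus a

lemma AD.fold_le {ι : Type*} (f : ι → L) {c : L} (s : Finset ι)
    (h : ∀ j ∈ s, D.le (f j) c) :
    haveI : Std.Commutative D.oplus := ⟨D.oplus_comm⟩
    haveI : Std.Associative D.oplus := ⟨D.oplus_assoc⟩
    D.le (s.fold D.oplus D.bot f) c := by
  haveI : Std.Commutative D.oplus := ⟨D.oplus_comm⟩
  haveI : Std.Associative D.oplus := ⟨D.oplus_assoc⟩
  classical
  induction s using Finset.induction with
  | empty => simpa using AD.bot_le D c
  | @insert a s' hj ih =>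
    rw [Finset.fold_insert hj]
    exact AD.sup_le D (h a (Finset.mem_insert_self a s'))
      (ih fun j hjs => h j (Finset.mem_insert_of_mem hjs))

lemma AD.fold_mono {ι : Type*} [DecidableEq ι] (f : ι → L) {s t : Finset ι}
    (hst : s ⊆ t) :
    haveI : Std.Commutative D.oplus := ⟨D.oplus_comm⟩
    haveI : Std.Associative D.oplus := ⟨D.oplus_assoc⟩
    D.le (s.fold D.oplus D.bot f) (t.fold D.oplus D.bot f) := by
  haveI : Std.Commutative D.oplus := ⟨D.oplus_comm⟩
  haveI : Std.Associative D.oplus := ⟨D.oplus_assoc⟩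
  have hunion : t = s ∪ t := (Finset.union_eq_right.mpr hst).symm
  have key : D.oplus (s.fold D.oplus D.bot f) (t.fold D.oplus D.bot f)
      = D.oplus ((s ∪ t).fold D.oplus D.bot f) ((s ∩ t).fold D.oplus D.bot f) :=
    (Finset.fold_union_inter).symm
  unfold AnnDom.le
  rw [key, ← hunion, Finset.inter_eq_left.mpr hst]
  rw [D.oplus_comm]
  exact AD.fold_le D f s (fun j hj => by
    have : ({j} : Finset ι) ⊆ t := Finset.singleton_subset_iff.mpr (hst hj)
    have h1 : D.le (f j) (t.fold D.oplus D.bot f) := by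
      have := AD.le_oplus_left D (f j) (t.fold D.oplus D.bot f)
      -- direct: f j ⊕ fold t = fold t since j ∈ t
      have hjt : j ∈ t := hst hj
      haveI : Std.IdempotentOp D.oplus := ⟨D.oplus_idem⟩
      unfold AnnDom.le
      conv_rhs => rw [← Finset.insert_eq_self.mpr hjt]
      rw [Finset.fold_insert_idem]
    exact h1)

lemma AD.le_fold_of_mem {ι : Type*} (f : ι → L) {s : Finset ι} {j : ι}
    (hj : j ∈ s) :
    haveI : Std.Commutative D.oplus := ⟨D.oplus_comm⟩
    haveI : Std.Associative D.oplus := ⟨D.oplus_assoc⟩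
    D.le (f j) (s.fold D.oplus D.bot f) := by
  haveI : Std.Commutative D.oplus := ⟨D.oplus_comm⟩
  haveI : Std.Associative D.oplus := ⟨D.oplus_assoc⟩
  haveI : Std.IdempotentOp D.oplus := ⟨D.oplus_idem⟩
  classical
  unfold AnnDom.le
  conv_rhs => rw [← Finset.insert_eq_self.mpr hj]
  rw [Finset.fold_insert_idem]

lemma AD.otimes_fold {ι : Type*} (f : ι → L) (x : L) (s : Finset ι) :
    haveI : Std.Commutative D.oplus := ⟨D.oplus_comm⟩
    haveI : Std.Associative D.oplus := ⟨D.oplus_assoc⟩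
    D.otimes x (s.fold D.oplus D.bot f)
      = s.fold D.oplus D.bot (fun j => D.otimes x (f j)) := by
  haveI : Std.Commutative D.oplus := ⟨D.oplus_comm⟩
  haveI : Std.Associative D.oplus := ⟨D.oplus_assoc⟩
  classical
  induction s using Finset.induction with
  | empty => rw [Finset.fold_empty, Finset.fold_empty, D.otimes_comm, D.bot_otimes]
  | @insert a s' hj ih =>
    rw [Finset.fold_insert hj, Finset.fold_insert hj, D.otimes_distrib, ih]

end Aux

/-- `Ā(z ⊕₁ z') ⪰₂ Ā(z) ⊗₂ Ā(z')`. -/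
theorem stmt12 {L1 L2 : Type*} (D1 : AnnDom L1) (D2 : AnnDom L2)
    (A : Finset (L1 × L2)) (z z' : L1) :
    D2.le (D2.otimes (Abar D1 D2 A z) (Abar D1 D2 A z'))
      (Abar D1 D2 A (D1.oplus z z')) := by
  classical
  haveI : Std.Commutative D2.oplus := ⟨D2.oplus_comm⟩
  haveI : Std.Associative D2.oplus := ⟨D2.oplus_assoc⟩
  haveI : Std.Commutative D2.otimes := ⟨D2.otimes_comm⟩
  haveI : Std.Associative D2.otimes := ⟨D2.otimes_assoc⟩
  haveI : Std.Commutative D1.oplus := ⟨D1.oplus_comm⟩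
  haveI : Std.Associative D1.oplus := ⟨D1.oplus_assoc⟩
  set p : Finset (L1 × L2) → L2 := fun J => J.fold D2.otimes D2.top Prod.snd with hp
  -- membership of unions in the K-set of the join
  have hmem : ∀ J ∈ Kset D1 A z, ∀ J' ∈ Kset D1 A z',
      (J ∪ J') ∈ Kset D1 A (D1.oplus z z') := by
    intro J hJ J' hJ'
    rw [Kset, Finset.mem_filter, Finset.mem_powerset] at hJ hJ' ⊢
    refine ⟨Finset.union_subset hJ.1 hJ'.1, ?_⟩
    have m1 : D1.le (joinFst D1 J) (joinFst D1 (J ∪ J')) :=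
      AD.fold_mono D1 Prod.fst Finset.subset_union_left
    have m2 : D1.le (joinFst D1 J') (joinFst D1 (J ∪ J')) :=
      AD.fold_mono D1 Prod.fst Finset.subset_union_right
    exact AD.sup_le D1 (AD.le_trans D1 hJ.2 m1) (AD.le_trans D1 hJ'.2 m2)
  -- each pairwise product is below the target
  have hle : ∀ J ∈ Kset D1 A z, ∀ J' ∈ Kset D1 A z',
      D2.le (D2.otimes (p J) (p J')) (Abar D1 D2 A (D1.oplus z z')) := by
    intro J hJ J' hJ'
    have h1 : D2.otimes (p (J ∪ J')) (p (J ∩ J')) = D2.otimes (p J) (p J') :=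
      Finset.fold_union_inter
    have h2 : D2.le (D2.otimes (p (J ∪ J')) (p (J ∩ J'))) (p (J ∪ J')) :=
      AD.otimes_le_left D2 _ _
    have h3 : D2.le (p (J ∪ J')) (Abar D1 D2 A (D1.oplus z z')) :=
      AD.le_fold_of_mem D2 p (hmem J hJ J' hJ')
    rw [← h1]
    exact AD.le_trans D2 h2 h3
  -- expand the product of the two folds
  show D2.le (D2.otimes ((Kset D1 A z).fold D2.oplus D2.bot p)
      ((Kset D1 A z').fold D2.oplus D2.bot p)) (Abar D1 D2 A (D1.oplus z z'))
  rw [D2.otimes_comm, AD.otimes_fold]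
  refine AD.fold_le D2 _ _ (fun J hJ => ?_)
  rw [D2.otimes_comm, AD.otimes_fold]
  exact AD.fold_le D2 _ _ (fun J' hJ' => hle J hJ J' hJ')
end

section
/- Let D₁ be an annotation domain that is a lattice and D₂ an annotation domain. For a finite set A ⊆ L₁ × L₂, elements (a,b), (c,d) ∈ A, and any z ∈ L₁, the induced function satisfies: the set A ∪ {(a ⊕₁ c, b ⊗₂ d)} induces the same function as A, i.e., for all z, Ā(z) = (A ∪ {(a ⊕₁ c, b ⊗₂ d)})‾(z). -/
/-- The annotation domain is a lattice: `⊗` is the greatest lower bound of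
the induced order `⪯`. -/
def AnnDom.IsLattice {L : Type*} (D : AnnDom L) : Prop :=
  ∀ a b c, (D.le c a ∧ D.le c b) ↔ D.le c (D.otimes a b)


/-!
Replacing the pair `e = (a ⊕₁ c, b ⊗₂ d)` in a witness `J ∈ K^{A ∪ {e}}_z` by `(a, b)` and
`(c, d)` gives a witness in `K^A_z` with the same join of first coordinates and a product of
second coordinates that is `⪯₂`-above that of `J` (since `x ⊗₂ y ⪯₂ y`). So the new witnesses
only add dominated terms to the idempotent join `⊕₂` defining `Ā(z)`.
-/

namespace AnnDom

variable {L α : Type*} (D : AnnDom L)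

instance : Std.Commutative D.oplus := ⟨D.oplus_comm⟩
instance : Std.Associative D.oplus := ⟨D.oplus_assoc⟩
instance : Std.IdempotentOp D.oplus := ⟨D.oplus_idem⟩
instance : Std.Commutative D.otimes := ⟨D.otimes_comm⟩
instance : Std.Associative D.otimes := ⟨D.otimes_assoc⟩

theorem le_refl (x : L) : D.le x x := D.oplus_idem x

theorem le_trans {x y z : L} (hxy : D.le x y) (hyz : D.le y z) : D.le x z := by
  unfold AnnDom.le at *
  rw [← hyz, ← D.oplus_assoc, hxy]

theorem le_antisymm {x y : L} (hxy : D.le x y) (hyx : D.le y x) : x = y := by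
  unfold AnnDom.le at *
  rw [← hyx, D.oplus_comm, hxy]

theorem bot_le (x : L) : D.le D.bot x := D.bot_oplus x

theorem le_oplus_left (x y : L) : D.le x (D.oplus x y) := by
  unfold AnnDom.le
  rw [← D.oplus_assoc, D.oplus_idem]

theorem oplus_le_iff {x y t : L} : D.le (D.oplus x y) t ↔ D.le x t ∧ D.le y t := by
  unfold AnnDom.le
  constructor
  · intro h
    refine ⟨?_, ?_⟩
    · rw [← h, ← D.oplus_assoc, ← D.oplus_assoc, D.oplus_idem]
    · rw [← h, D.oplus_comm x y, ← D.oplus_assoc, ← D.oplus_assoc, D.oplus_idem]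
  · rintro ⟨hx, hy⟩
    rw [D.oplus_assoc, hy, hx]

theorem otimes_le_right (x y : L) : D.le (D.otimes x y) y := by
  unfold AnnDom.le
  calc D.oplus (D.otimes x y) y
      = D.otimes y (D.oplus x D.top) := by
        rw [D.otimes_distrib, D.otimes_comm y D.top, D.top_otimes, D.otimes_comm]
    _ = y := by rw [D.oplus_comm, D.top_oplus, D.otimes_comm, D.top_otimes]

theorem otimes_le_otimes_left (t : L) {x y : L} (h : D.le x y) :
    D.le (D.otimes t x) (D.otimes t y) := by
  unfold AnnDom.le at *
  rw [← D.otimes_distrib, h]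

theorem le_fold_oplus_of_mem {s : Finset α} {f : α → L} {x : α} (hx : x ∈ s) :
    D.le (f x) (s.fold D.oplus D.bot f) := by
  classical
  rw [← Finset.insert_erase hx, Finset.fold_insert (Finset.notMem_erase x s)]
  exact D.le_oplus_left _ _

theorem fold_oplus_le_iff {s : Finset α} {f : α → L} {t : L} :
    D.le (s.fold D.oplus D.bot f) t ↔ ∀ x ∈ s, D.le (f x) t := by
  rw [Finset.fold_op_rel_iff_and (r := fun t x => D.le x t) D.oplus_le_iff]
  exact and_iff_right (D.bot_le t)

theorem fold_oplus_eq_of_subset {s t : Finset α} {f : α → L} (hst : s ⊆ t)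
    (hdom : ∀ x ∈ t, ∃ y ∈ s, D.le (f x) (f y)) :
    s.fold D.oplus D.bot f = t.fold D.oplus D.bot f := by
  refine D.le_antisymm (D.fold_oplus_le_iff.2 fun x hx => D.le_fold_oplus_of_mem (hst hx))
    (D.fold_oplus_le_iff.2 fun x hx => ?_)
  obtain ⟨y, hy, hxy⟩ := hdom x hx
  exact D.le_trans hxy (D.le_fold_oplus_of_mem hy)

theorem otimes_fold_le_fold_insert [DecidableEq α] (g : α → L) (x : α) (s : Finset α) :
    D.le (D.otimes (g x) (s.fold D.otimes D.top g)) ((insert x s).fold D.otimes D.top g) := by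
  by_cases hx : x ∈ s
  · rw [Finset.insert_eq_self.2 hx]
    exact D.otimes_le_right _ _
  · rw [Finset.fold_insert hx]
    exact D.le_refl _

end AnnDom

open Classical

section InducedFunction

variable {L1 L2 : Type*} (D1 : AnnDom L1) (D2 : AnnDom L2)

theorem mem_Kset {A J : Finset (L1 × L2)} {z : L1} :
    J ∈ Kset D1 A z ↔ J ⊆ A ∧ D1.le z (joinFst D1 J) := by
  rw [Kset, Finset.mem_filter, Finset.mem_powerset]

theorem Kset_mono {A B : Finset (L1 × L2)} (hAB : A ⊆ B) (z : L1) :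
    Kset D1 A z ⊆ Kset D1 B z := fun _ hJ =>
  (mem_Kset D1).2 ⟨((mem_Kset D1).1 hJ).1.trans hAB, ((mem_Kset D1).1 hJ).2⟩

theorem joinFst_insert (p : L1 × L2) (J : Finset (L1 × L2)) :
    joinFst D1 (insert p J) = D1.oplus p.1 (joinFst D1 J) :=
  Finset.fold_insert_idem

theorem Abar_eq_of_subset {A B : Finset (L1 × L2)} (hAB : A ⊆ B) (z : L1)
    (hdom : ∀ J ∈ Kset D1 B z, ∃ J' ∈ Kset D1 A z,
      D2.le (J.fold D2.otimes D2.top Prod.snd) (J'.fold D2.otimes D2.top Prod.snd)) :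
    Abar D1 D2 A z = Abar D1 D2 B z :=
  D2.fold_oplus_eq_of_subset (Kset_mono D1 hAB z) hdom

variable {A : Finset (L1 × L2)} {a c : L1} {b d : L2}

theorem exists_mem_Kset_le_of_mem_Kset_insert (hab : (a, b) ∈ A) (hcd : (c, d) ∈ A) {z : L1}
    {J : Finset (L1 × L2)} (hJ : J ∈ Kset D1 (insert (D1.oplus a c, D2.otimes b d) A) z) :
    ∃ J' ∈ Kset D1 A z,
      D2.le (J.fold D2.otimes D2.top Prod.snd) (J'.fold D2.otimes D2.top Prod.snd) := by
  set e : L1 × L2 := (D1.oplus a c, D2.otimes b d)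
  obtain ⟨hJsub, hzJ⟩ := (mem_Kset D1).1 hJ
  by_cases heJ : e ∈ J
  swap
  · refine ⟨J, (mem_Kset D1).2 ⟨fun x hx => ?_, hzJ⟩, D2.le_refl _⟩
    exact (Finset.mem_insert.1 (hJsub hx)).resolve_left fun hxe => heJ (hxe ▸ hx)
  set J₀ := J.erase e
  have hJe : J = insert e J₀ := (Finset.insert_erase heJ).symm
  refine ⟨insert (a, b) (insert (c, d) J₀), (mem_Kset D1).2 ⟨?_, ?_⟩, ?_⟩
  · exact Finset.insert_subset hab (Finset.insert_subset hcd (Finset.subset_insert_iff.1 hJsub))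
  · have hjoin : joinFst D1 (insert (a, b) (insert (c, d) J₀)) = joinFst D1 J := by
      rw [hJe, joinFst_insert, joinFst_insert, joinFst_insert, ← D1.oplus_assoc]
    rwa [hjoin]
  · rw [hJe, Finset.fold_insert (Finset.notMem_erase e J), D2.otimes_assoc]
    exact D2.le_trans
      (D2.otimes_le_otimes_left b (D2.otimes_fold_le_fold_insert Prod.snd (c, d) J₀))
      (D2.otimes_fold_le_fold_insert Prod.snd (a, b) _)

end InducedFunction

theorem stmt17_general {L1 L2 : Type*} (D1 : AnnDom L1) (D2 : AnnDom L2)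
    (A : Finset (L1 × L2)) (a c : L1) (b d : L2)
    (hab : (a, b) ∈ A) (hcd : (c, d) ∈ A) :
    ∀ z : L1, Abar D1 D2 A z
      = Abar D1 D2 (insert (D1.oplus a c, D2.otimes b d) A) z := fun z =>
  Abar_eq_of_subset D1 D2 (Finset.subset_insert _ A) z fun _ hJ =>
    exists_mem_Kset_le_of_mem_Kset_insert D1 D2 hab hcd hJ

/-- Adding the pair `(a ⊕₁ c, b ⊗₂ d)` for `(a,b), (c,d) ∈ A` does not
change the induced function: `Ā = (A ∪ {(a ⊕₁ c, b ⊗₂ d)})‾`. -/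
theorem stmt17 {L1 L2 : Type*} (D1 : AnnDom L1) (D2 : AnnDom L2)
    (hL : D1.IsLattice) (A : Finset (L1 × L2)) (a c : L1) (b d : L2)
    (hab : (a, b) ∈ A) (hcd : (c, d) ∈ A) :
    ∀ z : L1, Abar D1 D2 A z
      = Abar D1 D2 (insert (D1.oplus a c, D2.otimes b d) A) z :=
  stmt17_general D1 D2 A a c b d hab hcd
end
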